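/- arXiv:1309.1754 — 3 statements merged into one kernel-verified Lean document; each statement's English description precedes it below -/
import Mathlib

section
/- Let Γ and Γ' be two graph indicators with Γ' ≤ Γ entrywise (Γ' a submodel of Γ). Suppose Ω*_Γ is a graphical lasso solution for Γ, i.e., a minimizer of h_Γ(Ω) = −log det(Ω) + tr(Σ̂Ω) + (2λ/n)Σ_{γ_ij=1}|ω_ij| + (λ/n)Σ_i ω_ii over P_Γ ∩ M⁺, and suppose (Ω*_Γ)_ij = 0 for every (i,j) with γ_ij = 1 and γ'_ij = 0. Then Ω*_Γ is also a graphical lasso solution for Γ', i.e., it minimizes h_{Γ'}(Ω) = −log det(Ω) + tr(Σ̂Ω) + (2λ/n)Σ_{γ'_ij=1}|ω_ij| + (λ/n)Σ_i ω_ii over P_{Γ'} ∩ M⁺; in particular the graphical lasso solutions for the two models are identical. -/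
/-! On matrices vanishing on the edges of `Γ` outside `Γ'`, the penalties of `h_Γ` and `h_{Γ'}`
differ only by absolute values of zero entries, so the two objectives agree there. Every point of
`P_{Γ'}` is such a matrix and lies in `P_Γ`, and so does `Ω*` by hypothesis; hence minimality of
`Ω*` for `h_Γ` over `P_Γ ∩ M⁺` transfers to `h_{Γ'}` over `P_{Γ'} ∩ M⁺`. -/

open Matrix Finset

noncomputable section

/-- `P_Γ`: symmetric matrices whose `(i,j)` entry vanishes for `i < j` with `(i,j)` not an
edge of the graph `Γ`. -/
def inModel {p : ℕ} (Γ : Finset (Fin p × Fin p)) (Ω : Matrix (Fin p) (Fin p) ℝ) : Prop :=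
  Ω.IsSymm ∧ ∀ i j : Fin p, i < j → (i, j) ∉ Γ → Ω i j = 0

/-- The graphical lasso objective
`h_Γ(Ω) = −log det Ω + tr(Σ̂Ω) + (2λ/n)∑_{(i,j)∈Γ}|ω_ij| + (λ/n)∑_i ω_ii`. -/
def glassoObj {p : ℕ} (Shat : Matrix (Fin p) (Fin p) ℝ) (lam : ℝ) (n : ℕ)
    (Γ : Finset (Fin p × Fin p)) (Ω : Matrix (Fin p) (Fin p) ℝ) : ℝ :=
  -Real.log Ω.det + (Shat * Ω).trace +
    (2 * lam / n) * ∑ ij ∈ Γ, |Ω ij.1 ij.2| + (lam / n) * ∑ i, Ω i i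

section

variable {p : ℕ} {Γ Γ' : Finset (Fin p × Fin p)} {Ω : Matrix (Fin p) (Fin p) ℝ}

theorem inModel_mono (hsub : Γ' ⊆ Γ) (hΩ : inModel Γ' Ω) : inModel Γ Ω :=
  ⟨hΩ.1, fun i j hij hnot => hΩ.2 i j hij fun h => hnot (hsub h)⟩

theorem inModel.apply_eq_zero_of_mem_sdiff (hΩ : inModel Γ' Ω)
    (hΓ : ∀ ij ∈ Γ, ij.1 < ij.2) {ij : Fin p × Fin p} (h : ij ∈ Γ)
    (h' : ij ∉ Γ') : Ω ij.1 ij.2 = 0 :=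
  hΩ.2 ij.1 ij.2 (hΓ ij h) h'

theorem inModel_of_eq_zero_on_sdiff (hΩ : inModel Γ Ω)
    (hzero : ∀ ij ∈ Γ, ij ∉ Γ' → Ω ij.1 ij.2 = 0) : inModel Γ' Ω := by
  refine ⟨hΩ.1, fun i j hij hnot => ?_⟩
  by_cases hmem : (i, j) ∈ Γ
  · exact hzero (i, j) hmem hnot
  · exact hΩ.2 i j hij hmem

theorem glassoObj_eq_of_eq_zero_on_sdiff (Shat : Matrix (Fin p) (Fin p) ℝ) (lam : ℝ) (n : ℕ)
    (hsub : Γ' ⊆ Γ) (hzero : ∀ ij ∈ Γ, ij ∉ Γ' → Ω ij.1 ij.2 = 0) :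
    glassoObj Shat lam n Γ' Ω = glassoObj Shat lam n Γ Ω := by
  have hpen : ∑ ij ∈ Γ', |Ω ij.1 ij.2| = ∑ ij ∈ Γ, |Ω ij.1 ij.2| :=
    Finset.sum_subset hsub fun ij h h' => by rw [hzero ij h h', abs_zero]
  rw [glassoObj, glassoObj, hpen]

end

theorem stmt1_general (p n : ℕ) (Shat : Matrix (Fin p) (Fin p) ℝ) (lam : ℝ)
    (Γ Γ' : Finset (Fin p × Fin p))
    (hΓ : ∀ ij ∈ Γ, (ij : Fin p × Fin p).1 < ij.2) (hsub : Γ' ⊆ Γ)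
    (Ωs : Matrix (Fin p) (Fin p) ℝ) (hΩs : inModel Γ Ωs)
    (hmin : ∀ Ω : Matrix (Fin p) (Fin p) ℝ, inModel Γ Ω → Ω.PosDef →
      glassoObj Shat lam n Γ Ωs ≤ glassoObj Shat lam n Γ Ω)
    (hzero : ∀ ij ∈ Γ, ij ∉ Γ' → Ωs (ij : Fin p × Fin p).1 ij.2 = 0) :
    inModel Γ' Ωs ∧
    ∀ Ω : Matrix (Fin p) (Fin p) ℝ, inModel Γ' Ω → Ω.PosDef →
      glassoObj Shat lam n Γ' Ωs ≤ glassoObj Shat lam n Γ' Ω := by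
  refine ⟨inModel_of_eq_zero_on_sdiff hΩs hzero, fun Ω hΩ hpd => ?_⟩
  rw [glassoObj_eq_of_eq_zero_on_sdiff Shat lam n hsub hzero,
    glassoObj_eq_of_eq_zero_on_sdiff Shat lam n hsub
      fun ij h h' => hΩ.apply_eq_zero_of_mem_sdiff hΓ h h']
  exact hmin Ω (inModel_mono hsub hΩ) hpd

/-- Let `Γ' ≤ Γ` be graph indicators, and let `Ω*` minimize the graphical
lasso objective `h_Γ` over `P_Γ ∩ M⁺` with `(Ω*)_ij = 0` for every edge of `Γ` not in `Γ'`.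
Then `Ω*` also minimizes `h_{Γ'}` over `P_{Γ'} ∩ M⁺`; in particular the graphical lasso
solutions for the two models are identical. -/
theorem stmt1 (p n : ℕ) (hn : 0 < n) (Shat : Matrix (Fin p) (Fin p) ℝ)
    (hShat : Shat.IsSymm) (lam : ℝ) (hlam : 0 < lam)
    (Γ Γ' : Finset (Fin p × Fin p))
    (hΓ : ∀ ij ∈ Γ, (ij : Fin p × Fin p).1 < ij.2) (hsub : Γ' ⊆ Γ)
    (Ωs : Matrix (Fin p) (Fin p) ℝ)
    (hΩs : inModel Γ Ωs) (hΩspd : Ωs.PosDef)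
    (hmin : ∀ Ω : Matrix (Fin p) (Fin p) ℝ, inModel Γ Ω → Ω.PosDef →
      glassoObj Shat lam n Γ Ωs ≤ glassoObj Shat lam n Γ Ω)
    (hzero : ∀ ij ∈ Γ, ij ∉ Γ' → Ωs (ij : Fin p × Fin p).1 ij.2 = 0) :
    inModel Γ' Ωs ∧
    ∀ Ω : Matrix (Fin p) (Fin p) ℝ, inModel Γ' Ω → Ω.PosDef →
      glassoObj Shat lam n Γ' Ωs ≤ glassoObj Shat lam n Γ' Ω :=
  stmt1_general p n Shat lam Γ Γ' hΓ hsub Ωs hΩs hmin hzero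

end
end

section
/- Let A and B be p×p symmetric positive definite matrices with ‖A^{-1} − B^{-1}‖_∞ ≤ δ, and let V be any set of index pairs. Then the Hessian matrices satisfy ‖H_A − H_B‖_∞ ≤ 8δ‖B^{-1}‖_∞ + 4δ²; that is, for all (i,j), (l,m) ∈ V, |tr(A^{-1}E_(i,j)A^{-1}E_(l,m)) − tr(B^{-1}E_(i,j)B^{-1}E_(l,m))| ≤ 8δ‖B^{-1}‖_∞ + 4δ². -/
/-
Writing `A⁻¹ = B⁻¹ + D`, `E = E_(i,j)` and `F = E_(l,m)`, the difference of the two traces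
expands into `tr(D E B⁻¹ F) + tr(B⁻¹ E D F) + tr(D E D F)`. Each term
`tr(X E Y F) = ∑ E_ab F_cd Y_bc X_da` is at most `4 ‖X‖_∞ ‖Y‖_∞` in absolute value, since the
entries of `E` and of `F` have absolute sum at most 2; with `‖D‖_∞ ≤ δ` this gives `8 δ ‖B⁻¹‖_∞ + 4 δ²`.
-/

open Matrix Finset

noncomputable section

/-- Entrywise maximum norm of a matrix. -/
def maxNorm {p : ℕ} (A : Matrix (Fin p) (Fin p) ℝ) : ℝ :=
  ⨆ i, ⨆ j, |A i j|

/-- The symmetric matrix `E_(i,j)` with `1` in entries `(i,j)` and `(j,i)` and `0` elsewhere. -/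
def Estd {p : ℕ} (i j : Fin p) : Matrix (Fin p) (Fin p) ℝ :=
  fun k l => if (k = i ∧ l = j) ∨ (k = j ∧ l = i) then 1 else 0

theorem abs_sum_mul_le_sum_abs_mul {ι R : Type*} [Ring R] [LinearOrder R] [IsOrderedRing R]
    (s : Finset ι) (f g : ι → R) {M : R} (hg : ∀ i ∈ s, |g i| ≤ M) :
    |∑ i ∈ s, f i * g i| ≤ (∑ i ∈ s, |f i|) * M := by
  rw [sum_mul]
  refine (abs_sum_le_sum_abs _ _).trans (sum_le_sum fun i hi => ?_)
  rw [abs_mul]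
  exact mul_le_mul_of_nonneg_left (hg i hi) (abs_nonneg _)

section maxNorm

variable {p : ℕ}

theorem abs_apply_le_maxNorm (A : Matrix (Fin p) (Fin p) ℝ) (i j : Fin p) :
    |A i j| ≤ maxNorm A :=
  (le_ciSup (f := fun j => |A i j|) (Set.finite_range _).bddAbove j).trans
    (le_ciSup (f := fun i => ⨆ j, |A i j|) (Set.finite_range _).bddAbove i)

theorem maxNorm_nonneg (A : Matrix (Fin p) (Fin p) ℝ) : 0 ≤ maxNorm A :=
  Real.iSup_nonneg fun _ => Real.iSup_nonneg fun _ => abs_nonneg _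

theorem abs_mul_mul_apply_le (Y T X : Matrix (Fin p) (Fin p) ℝ) (b a : Fin p) :
    |(Y * T * X) b a| ≤ (∑ c, ∑ d, |T c d|) * (maxNorm Y * maxNorm X) := by
  have hYTX : (Y * T * X) b a = ∑ c, ∑ d, T c d * (Y b c * X d a) := by
    simp only [mul_apply, sum_mul]
    rw [sum_comm]
    exact sum_congr rfl fun _ _ => sum_congr rfl fun _ _ => by ring
  rw [hYTX, ← sum_product', ← sum_product']
  refine abs_sum_mul_le_sum_abs_mul _ _ _ fun cd _ => ?_
  rw [abs_mul]
  exact mul_le_mul (abs_apply_le_maxNorm _ _ _) (abs_apply_le_maxNorm _ _ _) (abs_nonneg _)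
    (maxNorm_nonneg _)

theorem abs_trace_mul_mul_mul_le (X S Y T : Matrix (Fin p) (Fin p) ℝ) :
    |(X * S * Y * T).trace| ≤
      (∑ a, ∑ b, |S a b|) * ((∑ c, ∑ d, |T c d|) * (maxNorm Y * maxNorm X)) := by
  have hcycle : (X * S * Y * T).trace = ∑ a, ∑ b, S a b * (Y * T * X) b a := by
    rw [mul_assoc, mul_assoc, trace_mul_comm, mul_assoc]
    rfl
  rw [hcycle, ← sum_product', ← sum_product']
  exact abs_sum_mul_le_sum_abs_mul _ _ _ fun ba _ => abs_mul_mul_apply_le _ _ _ _ _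

end maxNorm

theorem sum_abs_Estd_le {p : ℕ} (i j : Fin p) : ∑ a, ∑ b, |Estd i j a b| ≤ 2 := by
  calc ∑ a, ∑ b, |Estd i j a b|
      ≤ ∑ a, ∑ b, ((if a = i ∧ b = j then 1 else 0) + (if a = j ∧ b = i then 1 else 0)) := by
        gcongr with a _ b _
        simp only [Estd]
        split_ifs <;> norm_num
        tauto
    _ = 2 := by
        simp only [sum_add_distrib, ite_and]
        norm_num

theorem abs_trace_mul_Estd_mul_Estd_le {p : ℕ} (X Y : Matrix (Fin p) (Fin p) ℝ) (i j l m : Fin p) :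
    |(X * Estd i j * Y * Estd l m).trace| ≤ 4 * (maxNorm X * maxNorm Y) := by
  have hXY : 0 ≤ maxNorm Y * maxNorm X := mul_nonneg (maxNorm_nonneg _) (maxNorm_nonneg _)
  calc _ ≤ _ := abs_trace_mul_mul_mul_le X (Estd i j) Y (Estd l m)
    _ ≤ 2 * (2 * (maxNorm Y * maxNorm X)) := by
        refine mul_le_mul (sum_abs_Estd_le i j)
          (mul_le_mul_of_nonneg_right (sum_abs_Estd_le l m) hXY) ?_ zero_le_two
        exact mul_nonneg (by positivity) hXY
    _ = 4 * (maxNorm X * maxNorm Y) := by ring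

theorem trace_mul_mul_mul_sub {n R : Type*} [Fintype n] [CommRing R]
    (Y Z S T : Matrix n n R) :
    (Z * S * Z * T).trace - (Y * S * Y * T).trace =
      ((Z - Y) * S * Y * T).trace + (Y * S * (Z - Y) * T).trace +
        ((Z - Y) * S * (Z - Y) * T).trace := by
  simp only [sub_mul, mul_sub, trace_sub]
  ring

theorem stmt4_general (p : ℕ) (A B : Matrix (Fin p) (Fin p) ℝ) (δ : ℝ)
    (hδ : maxNorm (A⁻¹ - B⁻¹) ≤ δ) :
    ∀ i j l m : Fin p,
      |(A⁻¹ * Estd i j * A⁻¹ * Estd l m).trace -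
          (B⁻¹ * Estd i j * B⁻¹ * Estd l m).trace| ≤
        8 * δ * maxNorm B⁻¹ + 4 * δ ^ 2 := by
  intro i j l m
  set D := A⁻¹ - B⁻¹
  have hD := maxNorm_nonneg D
  have hN := maxNorm_nonneg B⁻¹
  rw [trace_mul_mul_mul_sub]
  calc _ ≤ 4 * (maxNorm D * maxNorm B⁻¹) + 4 * (maxNorm B⁻¹ * maxNorm D) +
        4 * (maxNorm D * maxNorm D) := by
        refine (abs_add_three _ _ _).trans ?_
        gcongr <;> exact abs_trace_mul_Estd_mul_Estd_le _ _ i j l m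
    _ ≤ 8 * δ * maxNorm B⁻¹ + 4 * δ ^ 2 := by nlinarith

/-- Let `A` and `B` be symmetric positive definite matrices with
`‖A⁻¹ − B⁻¹‖_∞ ≤ δ`.  Then for all index pairs `(i,j)` and `(l,m)`,
`|tr(A⁻¹E_(i,j)A⁻¹E_(l,m)) − tr(B⁻¹E_(i,j)B⁻¹E_(l,m))| ≤ 8δ‖B⁻¹‖_∞ + 4δ²`;
i.e. `‖H_A − H_B‖_∞ ≤ 8δ‖B⁻¹‖_∞ + 4δ²` for the Hessian matrices indexed by any set `V`
of index pairs. -/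
theorem stmt4 (p : ℕ) (A B : Matrix (Fin p) (Fin p) ℝ)
    (hA : A.PosDef) (hB : B.PosDef) (δ : ℝ)
    (hδ : maxNorm (A⁻¹ - B⁻¹) ≤ δ) :
    ∀ i j l m : Fin p,
      |(A⁻¹ * Estd i j * A⁻¹ * Estd l m).trace -
          (B⁻¹ * Estd i j * B⁻¹ * Estd l m).trace| ≤
        8 * δ * maxNorm B⁻¹ + 4 * δ ^ 2 :=
  stmt4_general p A B δ hδ

end
end

section
/- Let Ω be a p×p symmetric positive definite matrix and V any nonempty set of index pairs (i,j) with i ≤ j, each unordered pair appearing at most once. Then the matrix H_Ω, with rows and columns indexed by V and entries H_Ω{(i,j),(l,m)} = tr(Ω^{-1}E_(i,j)Ω^{-1}E_(l,m)), is symmetric positive definite and its smallest eigenvalue satisfies eig_1(H_Ω) ≥ (eig_1(Ω^{-1}))² = 1/‖Ω‖_{(2,2)}² > 0. -/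
/-!
With `A = ∑ₐ xₐ E_a`, the quadratic form of `H_Ω` is `xᵀ H_Ω x = tr(Ω⁻¹ A Ω⁻¹ A)`. Put
`λ = eig₁(Ω⁻¹) > 0`, so that `Ω⁻¹ ≥ λ I` in the Loewner order. Since the trace of a product of
two positive semidefinite matrices is nonnegative, `tr(Ω⁻¹ M) ≥ λ tr M` for every positive
semidefinite `M`; applying this to `M = A Ω⁻¹ A` and then to `M = A²` gives
`tr(Ω⁻¹ A Ω⁻¹ A) ≥ λ² tr(A²) = λ² ∑ᵢⱼ Aᵢⱼ² ≥ λ² ∑ₐ xₐ²`, where the last step uses that the pairs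
of `V` are distinct unordered pairs, so `A` has the entry `xₐ` at position `a`. This bounds every
eigenvalue of `H_Ω` below by `λ²`. Finally `λ = 1/‖Ω‖`: the spectrum of `Ω⁻¹` consists of the
inverses of the spectrum of `Ω`, whose largest element is `‖Ω‖`.
-/

open Matrix Finset

noncomputable section

/-- `L₂`-operator norm of a matrix. -/
def opNorm {p : ℕ} (A : Matrix (Fin p) (Fin p) ℝ) : ℝ :=
  ‖Matrix.toEuclideanCLM (𝕜 := ℝ) A‖

/-- The Hessian matrix `H_B` indexed by a set `V` of index pairs, with entries
`tr(B⁻¹ E_(i,j) B⁻¹ E_(l,m))`. -/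
def hessMat {p : ℕ} (B : Matrix (Fin p) (Fin p) ℝ) (V : Finset (Fin p × Fin p)) :
    Matrix {ij // ij ∈ V} {ij // ij ∈ V} ℝ :=
  fun a b => (B⁻¹ * Estd a.1.1 a.1.2 * B⁻¹ * Estd b.1.1 b.1.2).trace

section

open scoped MatrixOrder Matrix.Norms.L2Operator

variable {n : Type*} [Fintype n]

theorem Matrix.posDef_of_forall_mul_dotProduct_le {H : Matrix n n ℝ} (hH : H.IsHermitian)
    {c : ℝ} (hc : 0 < c) (h : ∀ x, c * (x ⬝ᵥ x) ≤ x ⬝ᵥ (H *ᵥ x)) : H.PosDef := by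
  refine .of_dotProduct_mulVec_pos hH fun x hx => ?_
  rw [star_trivial]
  exact (mul_pos hc (dotProduct_star_self_pos_iff.mpr hx)).trans_le (h x)

variable [DecidableEq n]

theorem Matrix.PosSemidef.trace_mul_nonneg {A B : Matrix n n ℝ} (hA : A.PosSemidef)
    (hB : B.PosSemidef) : 0 ≤ (A * B).trace := by
  obtain ⟨hSB, hS⟩ : (CFC.sqrt B)ᴴ = CFC.sqrt B ∧ CFC.sqrt B * CFC.sqrt B = B :=
    ⟨(CFC.sqrt_nonneg B).posSemidef.1, CFC.sqrt_mul_sqrt_self B hB.nonneg⟩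
  rw [← hS, ← Matrix.mul_assoc, Matrix.trace_mul_cycle]
  nth_rewrite 1 [← hSB]
  exact (hA.conjTranspose_mul_mul_same _).trace_nonneg

theorem Matrix.mul_trace_le_trace_mul_of_algebraMap_le {c : ℝ} {B M : Matrix n n ℝ}
    (hB : algebraMap ℝ _ c ≤ B) (hM : M.PosSemidef) : c * M.trace ≤ (B * M).trace := by
  have := (le_iff.mp hB).trace_mul_nonneg hM
  rwa [Matrix.sub_mul, trace_sub, Algebra.algebraMap_eq_smul_one, Matrix.smul_mul,
    Matrix.one_mul, trace_smul, smul_eq_mul, sub_nonneg] at this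

theorem Matrix.IsHermitian.algebraMap_iInf_eigenvalues_le {B : Matrix n n ℝ}
    (hB : B.IsHermitian) : algebraMap ℝ _ (⨅ i, hB.eigenvalues i) ≤ B := by
  rw [algebraMap_le_iff_le_spectrum (a := B) hB.isSelfAdjoint,
    hB.spectrum_real_eq_range_eigenvalues]
  rintro _ ⟨i, rfl⟩
  exact ciInf_le (Finite.bddBelow_range _) i

theorem Matrix.sq_mul_trace_mul_self_le_trace_mul_mul_mul {c : ℝ} {A B : Matrix n n ℝ}
    (hc : 0 ≤ c) (hB : algebraMap ℝ _ c ≤ B) (hA : A.IsHermitian) :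
    c ^ 2 * (A * A).trace ≤ (B * A * B * A).trace := by
  have hBpos : B.PosSemidef := by
    refine (le_trans ?_ hB).posSemidef
    rw [Algebra.algebraMap_eq_smul_one]
    exact (PosSemidef.one.smul hc).nonneg
  have hAA : (A * A).PosSemidef := by
    simpa only [hA.eq] using posSemidef_conjTranspose_mul_self A
  have hABA : (A * B * A).PosSemidef := by
    simpa only [hA.eq] using hBpos.conjTranspose_mul_mul_same A
  calc c ^ 2 * (A * A).trace = c * (c * (A * A).trace) := by ring
    _ ≤ c * (B * (A * A)).trace :=
        mul_le_mul_of_nonneg_left (mul_trace_le_trace_mul_of_algebraMap_le hB hAA) hc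
    _ = c * (A * B * A).trace := by
        rw [← Matrix.mul_assoc, trace_mul_cycle]
    _ ≤ (B * (A * B * A)).trace := mul_trace_le_trace_mul_of_algebraMap_le hB hABA
    _ = (B * A * B * A).trace := by simp only [Matrix.mul_assoc]

theorem Matrix.IsHermitian.le_eigenvalues_of_forall_mul_dotProduct_le {H : Matrix n n ℝ}
    (hH : H.IsHermitian) {c : ℝ} (h : ∀ x, c * (x ⬝ᵥ x) ≤ x ⬝ᵥ (H *ᵥ x)) (i : n) :
    c ≤ hH.eigenvalues i := by
  have hv : ⇑(hH.eigenvectorBasis i) ⬝ᵥ ⇑(hH.eigenvectorBasis i) = 1 := by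
    have := real_inner_self_eq_norm_sq (hH.eigenvectorBasis i)
    rw [hH.eigenvectorBasis.orthonormal.1 i, one_pow] at this
    rwa [EuclideanSpace.inner_eq_star_dotProduct, star_trivial] at this
  simpa [hH.eigenvalues_eq i, hv] using h (hH.eigenvectorBasis i)

theorem Matrix.inv_mem_spectrum_inv_iff {K : Type*} [Field K] {A : Matrix n n K}
    (hA : IsUnit A) {r : K} : r⁻¹ ∈ spectrum K A⁻¹ ↔ r ∈ spectrum K A := by
  rw [← hA.unit_spec, ← coe_units_inv, ← spectrum.map_inv, Set.inv_mem_inv]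

theorem Matrix.PosDef.iInf_eigenvalues_pos [Nonempty n] {A : Matrix n n ℝ} (hA : A.PosDef) :
    0 < ⨅ i, hA.1.eigenvalues i := by
  obtain ⟨i, hi⟩ := exists_eq_ciInf_of_finite (f := hA.1.eigenvalues)
  exact hi ▸ hA.eigenvalues_pos i

theorem Matrix.PosDef.iInf_eigenvalues_inv_eq_inv_norm [Nonempty n] {A : Matrix n n ℝ}
    (hA : A.PosDef) (hinv : A⁻¹.IsHermitian) :
    ⨅ i, hinv.eigenvalues i = ‖toEuclideanCLM (𝕜 := ℝ) A‖⁻¹ := by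
  rw [← cstar_norm_def]
  have hspec_pos : ∀ r ∈ spectrum ℝ A, 0 < r := by
    rw [hA.1.spectrum_real_eq_range_eigenvalues]
    rintro _ ⟨i, rfl⟩
    exact hA.eigenvalues_pos i
  set m := ⨅ i, hinv.eigenvalues i
  have hm_pos : 0 < m := hA.inv.iInf_eigenvalues_pos
  obtain ⟨i, hi⟩ := exists_eq_ciInf_of_finite (f := hinv.eigenvalues)
  have hm_mem : m ∈ spectrum ℝ A⁻¹ := by
    rw [hinv.spectrum_real_eq_range_eigenvalues]; exact ⟨i, hi⟩
  have h1 : m⁻¹ ≤ ‖A‖ := by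
    have := IsometricContinuousFunctionalCalculus.norm_spectrum_le (𝕜 := ℝ) A
      ((inv_mem_spectrum_inv_iff hA.isUnit).mp (by rwa [inv_inv])) hA.1.isSelfAdjoint
    rwa [Real.norm_of_nonneg (inv_pos.mpr hm_pos).le] at this
  obtain ⟨r, hr, hr_norm⟩ := (IsometricContinuousFunctionalCalculus.isGreatest_norm_spectrum
    (𝕜 := ℝ) A hA.1.isSelfAdjoint).1
  change ‖r‖ = ‖A‖ at hr_norm
  rw [Real.norm_of_nonneg (hspec_pos r hr).le] at hr_norm
  have h2 : m ≤ ‖A‖⁻¹ := by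
    have := (inv_mem_spectrum_inv_iff hA.isUnit).mpr hr
    rw [hinv.spectrum_real_eq_range_eigenvalues] at this
    obtain ⟨j, hj⟩ := this
    exact hr_norm ▸ hj ▸ ciInf_le (Finite.bddBelow_range _) j
  exact le_antisymm h2 (by rwa [inv_le_comm₀ (hr_norm ▸ hspec_pos r hr) hm_pos])

end

variable {p : ℕ}

theorem isHermitian_Estd (i j : Fin p) : (Estd i j).IsHermitian := by
  ext k l
  simp only [conjTranspose_apply, star_trivial, Estd]
  exact if_congr (by tauto) rfl rfl

def estdSum (V : Finset (Fin p × Fin p)) (x : {ij // ij ∈ V} → ℝ) :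
    Matrix (Fin p) (Fin p) ℝ :=
  ∑ a, x a • Estd a.1.1 a.1.2

theorem isHermitian_estdSum (V : Finset (Fin p × Fin p)) (x : {ij // ij ∈ V} → ℝ) :
    (estdSum V x).IsHermitian :=
  isSelfAdjoint_sum _ fun a _ => (isHermitian_Estd _ _).smul (.all (x a))

theorem estdSum_apply_self {V : Finset (Fin p × Fin p)} (hV : ∀ ij ∈ V, ij.1 ≤ ij.2)
    (x : {ij // ij ∈ V} → ℝ) (a : {ij // ij ∈ V}) :
    estdSum V x a.1.1 a.1.2 = x a := by
  simp only [estdSum, Matrix.sum_apply, Matrix.smul_apply, Estd, smul_eq_mul]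
  rw [Fintype.sum_eq_single a fun b hb => ?_, if_pos (.inl ⟨rfl, rfl⟩), mul_one]
  refine mul_eq_zero_of_right _ (if_neg ?_)
  have ha := hV a.1 a.2
  have hb' := hV b.1 b.2
  rintro (⟨h1, h2⟩ | ⟨h1, h2⟩)
  · exact hb (Subtype.ext (Prod.ext h1 h2)).symm
  · refine hb (Subtype.ext (Prod.ext ?_ ?_)).symm
    · exact le_antisymm (ha.trans h2.le) (hb'.trans h1.ge)
    · exact le_antisymm (h2.le.trans hb') (h1.ge.trans ha)

theorem dotProduct_self_le_trace_estdSum_mul_self {V : Finset (Fin p × Fin p)}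
    (hV : ∀ ij ∈ V, ij.1 ≤ ij.2) (x : {ij // ij ∈ V} → ℝ) :
    x ⬝ᵥ x ≤ (estdSum V x * estdSum V x).trace := by
  calc x ⬝ᵥ x = ∑ a : {ij // ij ∈ V}, estdSum V x a.1.1 a.1.2 ^ 2 :=
        sum_congr rfl fun a _ => by rw [estdSum_apply_self hV, sq]
    _ = ∑ q ∈ V, estdSum V x q.1 q.2 ^ 2 := sum_coe_sort V fun q => estdSum V x q.1 q.2 ^ 2
    _ ≤ ∑ q : Fin p × Fin p, estdSum V x q.1 q.2 ^ 2 :=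
        sum_le_sum_of_subset_of_nonneg (subset_univ V) fun q _ _ => sq_nonneg _
    _ = (estdSum V x * estdSum V x).trace := by
        simp only [Fintype.sum_prod_type, trace, Matrix.diag, Matrix.mul_apply, sq]
        refine sum_congr rfl fun i _ => sum_congr rfl fun j _ => ?_
        rw [← star_trivial (estdSum V x j i), (isHermitian_estdSum V x).apply]

theorem dotProduct_hessMat_mulVec (B : Matrix (Fin p) (Fin p) ℝ) (V : Finset (Fin p × Fin p))
    (x : {ij // ij ∈ V} → ℝ) :
    x ⬝ᵥ (hessMat B V *ᵥ x) = (B⁻¹ * estdSum V x * B⁻¹ * estdSum V x).trace := by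
  simp only [estdSum, Matrix.sum_mul, Matrix.mul_smul, Matrix.smul_mul,
    trace_sum, trace_smul, smul_eq_mul, dotProduct, mulVec, hessMat, Finset.mul_sum]
  rw [Finset.sum_comm]
  exact sum_congr rfl fun a _ => sum_congr rfl fun b _ => by ring

theorem isHermitian_hessMat (B : Matrix (Fin p) (Fin p) ℝ) (V : Finset (Fin p × Fin p)) :
    (hessMat B V).IsHermitian := by
  ext a b
  rw [conjTranspose_apply, star_trivial, hessMat, hessMat, Matrix.mul_assoc (_ * _),
    trace_mul_comm, ← Matrix.mul_assoc]

theorem sq_iInf_eigenvalues_mul_dotProduct_le_dotProduct_hessMat {B : Matrix (Fin p) (Fin p) ℝ}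
    (hB : B.PosDef) (hinv : B⁻¹.IsHermitian) {V : Finset (Fin p × Fin p)}
    (hV : ∀ ij ∈ V, ij.1 ≤ ij.2) (x : {ij // ij ∈ V} → ℝ) :
    (⨅ i, hinv.eigenvalues i) ^ 2 * (x ⬝ᵥ x) ≤ x ⬝ᵥ (hessMat B V *ᵥ x) := by
  have hc : 0 ≤ ⨅ i, hinv.eigenvalues i :=
    Real.iInf_nonneg fun i => (hB.inv.eigenvalues_pos i).le
  rw [dotProduct_hessMat_mulVec]
  calc _ ≤ (⨅ i, hinv.eigenvalues i) ^ 2 * (estdSum V x * estdSum V x).trace :=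
        mul_le_mul_of_nonneg_left (dotProduct_self_le_trace_estdSum_mul_self hV x) (sq_nonneg _)
    _ ≤ _ := sq_mul_trace_mul_self_le_trace_mul_mul_mul hc hinv.algebraMap_iInf_eigenvalues_le
        (isHermitian_estdSum V x)

/-- Let `Ω` be symmetric positive definite and `V` a nonempty set of index
pairs `(i,j)` with `i ≤ j` (each unordered pair appearing at most once).  Then the matrix
`H_Ω` with entries `tr(Ω⁻¹E_(i,j)Ω⁻¹E_(l,m))` for `(i,j),(l,m) ∈ V` is symmetric positive
definite and its smallest eigenvalue is at least `(eig₁(Ω⁻¹))² = 1/‖Ω‖₍₂,₂₎² > 0`. -/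
theorem stmt7 (p : ℕ) (Ω : Matrix (Fin p) (Fin p) ℝ) (hΩ : Ω.PosDef)
    (V : Finset (Fin p × Fin p)) (hVne : V.Nonempty) (hV : ∀ ij ∈ V, ij.1 ≤ ij.2) :
    (hessMat Ω V).PosDef ∧
    (∀ (hinv : (Ω⁻¹).IsHermitian) (hH : (hessMat Ω V).IsHermitian)
        (a : {ij // ij ∈ V}),
      (⨅ i, hinv.eigenvalues i) ^ 2 ≤ hH.eigenvalues a) ∧
    (∀ (hinv : (Ω⁻¹).IsHermitian),
      (⨅ i, hinv.eigenvalues i) ^ 2 = 1 / opNorm Ω ^ 2) ∧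
    0 < 1 / opNorm Ω ^ 2 := by
  have : Nonempty (Fin p) := ⟨hVne.choose.1⟩
  have hbound (hinv : (Ω⁻¹).IsHermitian) (x : {ij // ij ∈ V} → ℝ) :=
    sq_iInf_eigenvalues_mul_dotProduct_le_dotProduct_hessMat hΩ hinv hV x
  have hnorm (hinv : (Ω⁻¹).IsHermitian) : ⨅ i, hinv.eigenvalues i = (opNorm Ω)⁻¹ :=
    hΩ.iInf_eigenvalues_inv_eq_inv_norm hinv
  have hpos : 0 < ⨅ i, hΩ.inv.1.eigenvalues i := hΩ.inv.iInf_eigenvalues_pos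
  refine ⟨posDef_of_forall_mul_dotProduct_le (isHermitian_hessMat Ω V) (pow_pos hpos 2)
      (hbound _), fun hinv hH => hH.le_eigenvalues_of_forall_mul_dotProduct_le (hbound hinv),
    fun hinv => by rw [hnorm, inv_pow, one_div], ?_⟩
  rw [one_div, ← inv_pow, ← hnorm]
  exact pow_pos hpos 2

end
end
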